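/- arXiv:2506.07911 — 9 statements merged into one kernel-verified Lean document; each statement's English description precedes it below -/
import Mathlib

section
/- The steady counting function is a persistence function: for every filtration F with finite steady sets, the function σ^𝓕_F(u ≤ v) := |S^𝓕_F(u ≤ v)| satisfies, for all u₁ ≤ u₂ ≤ v₁ ≤ v₂: (1) σ(u₁ ≤ v₁) ≤ σ(u₂ ≤ v₁), (2) σ(u₂ ≤ v₂) ≤ σ(u₂ ≤ v₁), (3) σ(u₂ ≤ v₁) − σ(u₁ ≤ v₁) ≥ σ(u₂ ≤ v₂) − σ(u₁ ≤ v₂). -/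
open CategoryTheory

universe u v

/-- A feature on a finitely concrete mono category `(C, Φ)`: for each object `X`,
a collection of subsets of the underlying set `Φ.obj X`. -/
def Feature {C : Type u} [Category.{v} C] (Φ : C ⥤ Type v) :=
  ∀ X : C, Set (Set (Φ.obj X))

/-- The steady `𝓕`-sets of a filtration `F` at `(a ≤ b)`. -/
def steadySet {C : Type u} [Category.{v} C] (Φ : C ⥤ Type v) (𝓕 : Feature Φ)
    (F : ℝ ⥤ C) (a b : ℝ) : Set (Set (Φ.obj (F.obj a))) :=
  {A | ∀ (w : ℝ) (h1 : a ≤ w), w ≤ b → Φ.map (F.map (homOfLE h1)) '' A ∈ 𝓕 (F.obj w)}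

/-- The ranging `𝓕`-sets of a filtration `F` at `(a ≤ b)`. -/
def rangingSet {C : Type u} [Category.{v} C] (Φ : C ⥤ Type v) (𝓕 : Feature Φ)
    (F : ℝ ⥤ C) (a b : ℝ) : Set (Set (Φ.obj (F.obj a))) :=
  {A | ∃ (x y : ℝ) (hx : x ≤ a) (_ : b ≤ y) (hy : a ≤ y) (A' : Set (Φ.obj (F.obj x))),
      A' ∈ 𝓕 (F.obj x) ∧ A = Φ.map (F.map (homOfLE hx)) '' A' ∧
      Φ.map (F.map (homOfLE hy)) '' A ∈ 𝓕 (F.obj y)}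

/-! Push a set along the transition map `F u₁ → F u₂`. The image of a set steady on `[u₁, v]` is
steady on `[u₂, v]`, and by injectivity counting images loses nothing, which gives (1); (2) is the
inclusion `S(u₂ ≤ v₂) ⊆ S(u₂ ≤ v₁)`. For (3), both sides count the sets steady from `u₂` that are not
images of sets steady from `u₁`: if such an image of a set steady on `[u₁, v₁]` stays steady until `v₂`,
then the set itself was steady on all of `[u₁, v₂]`, since `[u₁, v₁]` and `[u₂, v₂]` cover it. -/

theorem Set.ncard_sdiff_image_of_injective {α β : Type*} {f : α → β} (hf : Function.Injective f)
    {s : Set α} {t : Set β} (hst : f '' s ⊆ t) (ht : t.Finite) :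
    ((t \ f '' s).ncard : ℤ) = t.ncard - s.ncard := by
  rw [← Set.ncard_image_of_injective s hf, ← Set.ncard_sdiff_add_ncard_of_subset hst ht]
  push_cast
  ring

section Filtration

variable {C : Type u} [Category.{v} C] (Φ : C ⥤ Type v) (𝓕 : Feature Φ) (F : ℝ ⥤ C)

theorem image_map_homOfLE_trans {a b c : ℝ} (hab : a ≤ b) (hbc : b ≤ c) (B : Set (Φ.obj (F.obj a))) :
    Φ.map (F.map (homOfLE (hab.trans hbc))) '' B
      = Φ.map (F.map (homOfLE hbc)) '' (Φ.map (F.map (homOfLE hab)) '' B) := by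
  rw [← Set.image_comp, ← types_comp, ← Φ.map_comp, ← F.map_comp, homOfLE_comp]

variable {Φ 𝓕 F}

theorem steadySet_anti_right {a b b' : ℝ} (hb : b ≤ b') :
    steadySet Φ 𝓕 F a b' ⊆ steadySet Φ 𝓕 F a b :=
  fun _ hA w haw hwb => hA w haw (hwb.trans hb)

theorem image_mem_steadySet {a a' b : ℝ} (ha : a ≤ a') {B : Set (Φ.obj (F.obj a))}
    (hB : B ∈ steadySet Φ 𝓕 F a b) :
    Φ.map (F.map (homOfLE ha)) '' B ∈ steadySet Φ 𝓕 F a' b := fun w haw hwb => by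
  rw [← image_map_homOfLE_trans]
  exact hB w (ha.trans haw) hwb

theorem mem_steadySet_of_image_mem {a a' b b' : ℝ} (ha : a ≤ a') (ha'b : a' ≤ b)
    {B : Set (Φ.obj (F.obj a))} (hB : B ∈ steadySet Φ 𝓕 F a b)
    (hB' : Φ.map (F.map (homOfLE ha)) '' B ∈ steadySet Φ 𝓕 F a' b') :
    B ∈ steadySet Φ 𝓕 F a b' := fun w haw hwb' => by
  rcases le_total w b with hwb | hbw
  · exact hB w haw hwb
  · rw [image_map_homOfLE_trans Φ F ha (ha'b.trans hbw)]
    exact hB' w (ha'b.trans hbw) hwb'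

theorem steadySet_sdiff_image_subset {u₁ u₂ v₁ v₂ : ℝ} (h1 : u₁ ≤ u₂) (h2 : u₂ ≤ v₁)
    (h3 : v₁ ≤ v₂) :
    steadySet Φ 𝓕 F u₂ v₂ \ Set.image (Φ.map (F.map (homOfLE h1))) '' steadySet Φ 𝓕 F u₁ v₂
      ⊆ steadySet Φ 𝓕 F u₂ v₁ \ Set.image (Φ.map (F.map (homOfLE h1))) '' steadySet Φ 𝓕 F u₁ v₁ := by
  rintro A ⟨hA, hAnot⟩
  refine ⟨steadySet_anti_right h3 hA, ?_⟩
  rintro ⟨B, hB, rfl⟩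
  exact hAnot ⟨B, mem_steadySet_of_image_mem h1 h2 hB hA, rfl⟩

end Filtration

theorem steady_counting_is_persistence_function_general {C : Type u} [Category.{v} C] (Φ : C ⥤ Type v)
    (hfin : ∀ X : C, Finite (Φ.obj X))
    (hinj : ∀ {X Y : C} (f : X ⟶ Y), Function.Injective (Φ.map f))
    (𝓕 : Feature Φ)
    (F : ℝ ⥤ C) (σ : ℝ → ℝ → ℤ)
    (hσ : ∀ a b : ℝ, σ a b = (Nat.card (steadySet Φ 𝓕 F a b) : ℤ))
    (u₁ u₂ v₁ v₂ : ℝ) (h1 : u₁ ≤ u₂) (h2 : u₂ ≤ v₁) (h3 : v₁ ≤ v₂) :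
    σ u₁ v₁ ≤ σ u₂ v₁ ∧ σ u₂ v₂ ≤ σ u₂ v₁ ∧
      σ u₂ v₂ - σ u₁ v₂ ≤ σ u₂ v₁ - σ u₁ v₁ := by
  have := hfin (F.obj u₂)
  have hι : Function.Injective (Set.image (Φ.map (F.map (homOfLE h1)))) :=
    Set.image_injective.2 (hinj _)
  have hfin₂ (b : ℝ) : (steadySet Φ 𝓕 F u₂ b).Finite := Set.toFinite _
  have hmaps (b : ℝ) : Set.image (Φ.map (F.map (homOfLE h1))) '' steadySet Φ 𝓕 F u₁ b
      ⊆ steadySet Φ 𝓕 F u₂ b := Set.image_subset_iff.2 fun _ => image_mem_steadySet h1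
  simp only [hσ, Nat.card_coe_set_eq]
  refine ⟨?_, ?_, ?_⟩
  · exact_mod_cast Set.ncard_le_ncard_of_injOn _ (fun _ => image_mem_steadySet h1) hι.injOn
      (hfin₂ v₁)
  · exact_mod_cast Set.ncard_le_ncard (steadySet_anti_right h3) (hfin₂ v₁)
  · rw [← Set.ncard_sdiff_image_of_injective hι (hmaps v₂) (hfin₂ v₂),
      ← Set.ncard_sdiff_image_of_injective hι (hmaps v₁) (hfin₂ v₁)]
    exact_mod_cast Set.ncard_le_ncard (steadySet_sdiff_image_subset h1 h2 h3) (hfin₂ v₁).sdiff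

/-- the steady counting function `σ^𝓕_F` is a persistence function. -/
theorem steady_counting_is_persistence_function {C : Type u} [Category.{v} C] (Φ : C ⥤ Type v)
    (hfin : ∀ X : C, Finite (Φ.obj X)) (hfaith : Φ.Faithful)
    (hinj : ∀ {X Y : C} (f : X ⟶ Y), Function.Injective (Φ.map f))
    (hmono : ∀ {X Y : C} (f : X ⟶ Y), Mono f)
    (𝓕 : Feature Φ)
    (hiso : ∀ {X Y : C} (f : X ≅ Y) (A : Set (Φ.obj X)), A ∈ 𝓕 X ↔ Φ.map f.hom '' A ∈ 𝓕 Y)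
    (F : ℝ ⥤ C) (σ : ℝ → ℝ → ℤ)
    (hσ : ∀ a b : ℝ, σ a b = (Nat.card (steadySet Φ 𝓕 F a b) : ℤ))
    (u₁ u₂ v₁ v₂ : ℝ) (h1 : u₁ ≤ u₂) (h2 : u₂ ≤ v₁) (h3 : v₁ ≤ v₂) :
    σ u₁ v₁ ≤ σ u₂ v₁ ∧ σ u₂ v₂ ≤ σ u₂ v₁ ∧
      σ u₂ v₂ - σ u₁ v₂ ≤ σ u₂ v₁ - σ u₁ v₁ :=
  steady_counting_is_persistence_function_general Φ hfin hinj 𝓕 F σ hσ u₁ u₂ v₁ v₂ h1 h2 h3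
end

section
/- Set-difference inclusion for steady sets: for a filtration F, a feature 𝓕, and reals u₁ ≤ u₂ ≤ v₁ ≤ v₂, the difference S^𝓕_F(u₂ ≤ v₂) \ S^𝓕_F(u₁ ≤ v₂) is contained in S^𝓕_F(u₂ ≤ v₁) \ S^𝓕_F(u₁ ≤ v₁), where membership in S^𝓕_F(u₁ ≤ ·) for a pair (A, F_{u₂}) means it is the image under F_{u₁}^{u₂} of an element of S^𝓕_F(u₁ ≤ ·). -/
open CategoryTheory

universe u v

/-- set-difference inclusion for steady sets, where membership of a pair over
`F_{u₂}` in `S^𝓕_F(u₁ ≤ ·)` means being the image under `F_{u₁}^{u₂}` of an element of it. -/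
theorem steadySet_sdiff_subset {C : Type u} [Category.{v} C] (Φ : C ⥤ Type v)
    (hfin : ∀ X : C, Finite (Φ.obj X)) (hfaith : Φ.Faithful)
    (hinj : ∀ {X Y : C} (f : X ⟶ Y), Function.Injective (Φ.map f))
    (hmono : ∀ {X Y : C} (f : X ⟶ Y), Mono f)
    (𝓕 : Feature Φ)
    (hiso : ∀ {X Y : C} (f : X ≅ Y) (A : Set (Φ.obj X)), A ∈ 𝓕 X ↔ Φ.map f.hom '' A ∈ 𝓕 Y)
    (F : ℝ ⥤ C) (u₁ u₂ v₁ v₂ : ℝ) (h1 : u₁ ≤ u₂) (h2 : u₂ ≤ v₁) (h3 : v₁ ≤ v₂) :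
    steadySet Φ 𝓕 F u₂ v₂ \
        ((fun A => Φ.map (F.map (homOfLE h1)) '' A) '' steadySet Φ 𝓕 F u₁ v₂) ⊆
      steadySet Φ 𝓕 F u₂ v₁ \
        ((fun A => Φ.map (F.map (homOfLE h1)) '' A) '' steadySet Φ 𝓕 F u₁ v₁) := by
  rintro A ⟨hA, hA'⟩
  refine ⟨fun w hw1 hw2 => hA w hw1 (hw2.trans h3), ?_⟩
  rintro ⟨B, hB, rfl⟩
  refine hA' ⟨B, fun w hw1 hw2 => ?_, rfl⟩
  rcases le_or_gt w v₁ with hwv | hwv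
  · exact hB w hw1 hwv
  · have hw : u₂ ≤ w := h2.trans hwv.le
    have : Φ.map (F.map (homOfLE hw1)) '' B =
        Φ.map (F.map (homOfLE hw)) '' (Φ.map (F.map (homOfLE h1)) '' B) := by
      rw [← Set.image_comp, ← types_comp, ← Φ.map_comp, ← F.map_comp]
      rfl
    rw [this]
    exact hA w hw hw2
end

section
/- A feature 𝓕 is convex if and only if for every filtration F and all u ≤ v, the steady and ranging sets coincide: S^𝓕_F(u ≤ v) = R^𝓕_F(u ≤ v). -/
open CategoryTheory

universe u v

/-- A feature is convex if `(A,X) ∈ 𝓕` and `ι'ι(A,X) ∈ 𝓕` imply `ι(A,X) ∈ 𝓕`. -/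
def ConvexFeature {C : Type u} [Category.{v} C] (Φ : C ⥤ Type v) (𝓕 : Feature Φ) : Prop :=
  ∀ {X X' X'' : C} (ι : X ⟶ X') (ι' : X' ⟶ X'') (A : Set (Φ.obj X)),
    A ∈ 𝓕 X → Φ.map (ι ≫ ι') '' A ∈ 𝓕 X'' → Φ.map ι '' A ∈ 𝓕 X'

/-!
A ranging set is an `𝓕`-set pushed forward from some `x ≤ a` that is still an `𝓕`-set at
some `y ≥ b`; convexity applied to `x → w → y` makes it an `𝓕`-set at every `w ∈ [a, b]`, i.e.
steady, and a steady set is trivially ranging (take `x = a`, `y = b`). Conversely, for the step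
filtration `X` on `(-∞, 0]`, `X'` on `(0, 2)`, `X''` on `[2, ∞)`, a set that is an `𝓕`-set at
`0` and at `2` is ranging at `a = b = 1`, so steadiness there is exactly the convexity condition.
-/

section Filtration

variable {C : Type u} [Category.{v} C] (Φ : C ⥤ Type v) (𝓕 : Feature Φ) (F : ℝ ⥤ C)

lemma image_map_homOfLE_refl (a : ℝ) (A : Set (Φ.obj (F.obj a))) :
    Φ.map (F.map (homOfLE (le_refl a))) '' A = A := by
  simp

lemma image_map_homOfLE_trans_s5 {x y z : ℝ} (hxy : x ≤ y) (hyz : y ≤ z)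
    (A : Set (Φ.obj (F.obj x))) :
    Φ.map (F.map (homOfLE hyz)) '' (Φ.map (F.map (homOfLE hxy)) '' A) =
      Φ.map (F.map (homOfLE (hxy.trans hyz))) '' A := by
  rw [← Set.image_comp, ← types_comp, ← Φ.map_comp, ← F.map_comp, homOfLE_comp]

lemma steadySet_subset_rangingSet {a b : ℝ} (hab : a ≤ b) :
    steadySet Φ 𝓕 F a b ⊆ rangingSet Φ 𝓕 F a b := by
  intro A hA
  have hAa : A ∈ 𝓕 (F.obj a) := by
    simpa only [image_map_homOfLE_refl] using hA a le_rfl hab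
  exact ⟨a, b, le_rfl, le_rfl, hab, A, hAa, (image_map_homOfLE_refl Φ F a A).symm,
    hA b hab le_rfl⟩

lemma rangingSet_subset_steadySet (hconv : ConvexFeature Φ 𝓕) (a b : ℝ) :
    rangingSet Φ 𝓕 F a b ⊆ steadySet Φ 𝓕 F a b := by
  rintro A ⟨x, y, hxa, hby, hay, A', hA', rfl, hAy⟩ w haw hwb
  rw [image_map_homOfLE_trans_s5] at hAy ⊢
  refine hconv (F.map (homOfLE (hxa.trans haw))) (F.map (homOfLE (hwb.trans hby))) A' hA' ?_
  rwa [← F.map_comp, homOfLE_comp]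

lemma mem_of_steadySet_eq_rangingSet {x a y : ℝ}
    (h : steadySet Φ 𝓕 F a a = rangingSet Φ 𝓕 F a a) (hxa : x ≤ a) (hay : a ≤ y)
    {A : Set (Φ.obj (F.obj x))} (hA : A ∈ 𝓕 (F.obj x))
    (hAy : Φ.map (F.map (homOfLE (hxa.trans hay))) '' A ∈ 𝓕 (F.obj y)) :
    Φ.map (F.map (homOfLE hxa)) '' A ∈ 𝓕 (F.obj a) := by
  have hranging : Φ.map (F.map (homOfLE hxa)) '' A ∈ rangingSet Φ 𝓕 F a a :=
    ⟨x, y, hxa, hay, hay, A, hA, rfl, by rwa [image_map_homOfLE_trans_s5]⟩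
  rw [← h] at hranging
  simpa only [image_map_homOfLE_refl] using hranging a le_rfl le_rfl

/-- The points `x ≤ a ≤ y` are only known to land on `i ≤ j ≤ k` up to propositional
equality, so the statement is phrased for arbitrary `i j k` and closed by `subst`. -/
lemma mem_of_steadySet_eq_rangingSet_comp {P : Type*} [Preorder P] (G : P ⥤ C) {s : ℝ → P}
    (hs : Monotone s) {x a y : ℝ}
    (h : steadySet Φ 𝓕 (hs.functor ⋙ G) a a = rangingSet Φ 𝓕 (hs.functor ⋙ G) a a)
    (hxa : x ≤ a) (hay : a ≤ y) {i j k : P} (hi : s x = i) (hj : s a = j) (hk : s y = k)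
    (hij : i ≤ j) (hjk : j ≤ k) {A : Set (Φ.obj (G.obj i))} (hA : A ∈ 𝓕 (G.obj i))
    (hAk : Φ.map (G.map (homOfLE (hij.trans hjk))) '' A ∈ 𝓕 (G.obj k)) :
    Φ.map (G.map (homOfLE hij)) '' A ∈ 𝓕 (G.obj j) := by
  subst hi hj hk
  exact mem_of_steadySet_eq_rangingSet Φ 𝓕 _ h hxa hay hA hAk

end Filtration

noncomputable def stepIndex (t : ℝ) : Fin 3 :=
  if t ≤ 0 then 0 else if t < 2 then 1 else 2

lemma stepIndex_monotone : Monotone stepIndex := by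
  intro s t hst
  unfold stepIndex
  split_ifs <;> simp_all [Fin.le_def] <;> linarith

lemma stepIndex_zero : stepIndex 0 = 0 := by norm_num [stepIndex]
lemma stepIndex_one : stepIndex 1 = 1 := by norm_num [stepIndex]
lemma stepIndex_two : stepIndex 2 = 2 := by norm_num [stepIndex]

section Step

variable {C : Type u} [Category.{v} C] {X X' X'' : C}

noncomputable def stepFiltration (ι : X ⟶ X') (ι' : X' ⟶ X'') : ℝ ⥤ C :=
  stepIndex_monotone.functor ⋙ ComposableArrows.mk₂ ι ι'

lemma ConvexFeature.of_steadySet_eq_rangingSet (Φ : C ⥤ Type v) (𝓕 : Feature Φ)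
    (h : ∀ (F : ℝ ⥤ C) (a : ℝ), steadySet Φ 𝓕 F a a = rangingSet Φ 𝓕 F a a) :
    ConvexFeature Φ 𝓕 := by
  intro X X' X'' ι ι' A hA hA''
  exact mem_of_steadySet_eq_rangingSet_comp Φ 𝓕 (ComposableArrows.mk₂ ι ι') stepIndex_monotone
    (h (stepFiltration ι ι') 1) zero_le_one one_le_two stepIndex_zero stepIndex_one stepIndex_two
    (by decide) (by decide) hA hA''

end Step

theorem convex_iff_steady_eq_ranging_general {C : Type u} [Category.{v} C] (Φ : C ⥤ Type v)
    (𝓕 : Feature Φ) :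
    ConvexFeature Φ 𝓕 ↔
      ∀ (F : ℝ ⥤ C) (a b : ℝ), a ≤ b → steadySet Φ 𝓕 F a b = rangingSet Φ 𝓕 F a b := by
  constructor
  · intro hconv F a b hab
    exact (steadySet_subset_rangingSet Φ 𝓕 F hab).antisymm
      (rangingSet_subset_steadySet Φ 𝓕 F hconv a b)
  · intro h
    exact ConvexFeature.of_steadySet_eq_rangingSet Φ 𝓕 fun F a => h F a a le_rfl

/-- a feature is convex iff steady and ranging sets coincide
for every filtration and all `u ≤ v`. -/
theorem convex_iff_steady_eq_ranging {C : Type u} [Category.{v} C] (Φ : C ⥤ Type v)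
    (hfin : ∀ X : C, Finite (Φ.obj X)) (hfaith : Φ.Faithful)
    (hinj : ∀ {X Y : C} (f : X ⟶ Y), Function.Injective (Φ.map f))
    (hmono : ∀ {X Y : C} (f : X ⟶ Y), Mono f)
    (𝓕 : Feature Φ)
    (hiso : ∀ {X Y : C} (f : X ≅ Y) (A : Set (Φ.obj X)), A ∈ 𝓕 X ↔ Φ.map f.hom '' A ∈ 𝓕 Y) :
    ConvexFeature Φ 𝓕 ↔
      ∀ (F : ℝ ⥤ C) (a b : ℝ), a ≤ b → steadySet Φ 𝓕 F a b = rangingSet Φ 𝓕 F a b :=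
  convex_iff_steady_eq_ranging_general Φ 𝓕
end

section
/- If a feature 𝓕 is right-continued, then its maximal version M𝓕 and its minimal version m𝓕 are convex features. -/
open CategoryTheory

universe u v

/-- A feature is right-continued if it is preserved by pushing forward along monomorphisms. -/
def RightContinued {C : Type u} [Category.{v} C] (Φ : C ⥤ Type v) (𝓕 : Feature Φ) : Prop :=
  ∀ {X X' : C} (ι : X ⟶ X') (A : Set (Φ.obj X)), A ∈ 𝓕 X → Φ.map ι '' A ∈ 𝓕 X'

/-- A feature is left-continued if it is reflected by pushing forward along monomorphisms. -/
def LeftContinued {C : Type u} [Category.{v} C] (Φ : C ⥤ Type v) (𝓕 : Feature Φ) : Prop :=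
  ∀ {X X' : C} (ι : X ⟶ X') (A : Set (Φ.obj X)), Φ.map ι '' A ∈ 𝓕 X' → A ∈ 𝓕 X

/-- A feature is monotone if it is left-continued and downward closed in the subset. -/
def MonotoneFeature {C : Type u} [Category.{v} C] (Φ : C ⥤ Type v) (𝓕 : Feature Φ) : Prop :=
  LeftContinued Φ 𝓕 ∧ ∀ (X : C) (A B : Set (Φ.obj X)), B ⊆ A → A ∈ 𝓕 X → B ∈ 𝓕 X

/-- The maximal version of a feature. -/
def maxVersion {C : Type u} [Category.{v} C] (Φ : C ⥤ Type v) (𝓕 : Feature Φ) : Feature Φ :=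
  fun X => {A | A ∈ 𝓕 X ∧ ∀ B : Set (Φ.obj X), A ⊆ B → B ∈ 𝓕 X → A = B}

/-- The minimal version of a feature. -/
def minVersion {C : Type u} [Category.{v} C] (Φ : C ⥤ Type v) (𝓕 : Feature Φ) : Feature Φ :=
  fun X => {A | A ∈ 𝓕 X ∧ ∀ B : Set (Φ.obj X), B ⊆ A → B ∈ 𝓕 X → A = B}

/-!
Pushing forward along a monomorphism `ι'` is injective on subsets and, by right-continuity,
preserves `𝓕`. So an `𝓕`-set `B` strictly above (below) `ι(A)` would give the `𝓕`-set `ι'(B)`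
strictly above (below) `ι'ι(A)`, contradicting the extremality of `ι'ι(A)`.
-/

section

variable {C : Type u} [Category.{v} C] {Φ : C ⥤ Type v} {𝓕 : Feature Φ}

theorem mem_maxVersion_of_image_mem_maxVersion (hrc : RightContinued Φ 𝓕) {X Y : C}
    {f : X ⟶ Y} (hf : Function.Injective (Φ.map f)) {A : Set (Φ.obj X)} (hA : A ∈ 𝓕 X)
    (hfA : Φ.map f '' A ∈ maxVersion Φ 𝓕 Y) : A ∈ maxVersion Φ 𝓕 X :=
  ⟨hA, fun B hAB hB => Set.image_injective.mpr hf (hfA.2 _ (Set.image_mono hAB) (hrc f B hB))⟩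

theorem mem_minVersion_of_image_mem_minVersion (hrc : RightContinued Φ 𝓕) {X Y : C}
    {f : X ⟶ Y} (hf : Function.Injective (Φ.map f)) {A : Set (Φ.obj X)} (hA : A ∈ 𝓕 X)
    (hfA : Φ.map f '' A ∈ minVersion Φ 𝓕 Y) : A ∈ minVersion Φ 𝓕 X :=
  ⟨hA, fun B hBA hB => Set.image_injective.mpr hf (hfA.2 _ (Set.image_mono hBA) (hrc f B hB))⟩

theorem convexFeature_maxVersion (hinj : ∀ {X Y : C} (f : X ⟶ Y), Function.Injective (Φ.map f))
    (hrc : RightContinued Φ 𝓕) : ConvexFeature Φ (maxVersion Φ 𝓕) := by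
  intro X X' X'' ι ι' A hA hA''
  rw [Functor.map_comp, types_comp, Set.image_comp] at hA''
  exact mem_maxVersion_of_image_mem_maxVersion hrc (hinj ι') (hrc ι A hA.1) hA''

theorem convexFeature_minVersion (hinj : ∀ {X Y : C} (f : X ⟶ Y), Function.Injective (Φ.map f))
    (hrc : RightContinued Φ 𝓕) : ConvexFeature Φ (minVersion Φ 𝓕) := by
  intro X X' X'' ι ι' A hA hA''
  rw [Functor.map_comp, types_comp, Set.image_comp] at hA''
  exact mem_minVersion_of_image_mem_minVersion hrc (hinj ι') (hrc ι A hA.1) hA''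

end

theorem maxVersion_minVersion_convex_general {C : Type u} [Category.{v} C] (Φ : C ⥤ Type v)
    (hinj : ∀ {X Y : C} (f : X ⟶ Y), Function.Injective (Φ.map f))
    (𝓕 : Feature Φ)
    (hrc : RightContinued Φ 𝓕) :
    ConvexFeature Φ (maxVersion Φ 𝓕) ∧ ConvexFeature Φ (minVersion Φ 𝓕) :=
  ⟨convexFeature_maxVersion hinj hrc, convexFeature_minVersion hinj hrc⟩

/-- if `𝓕` is right-continued then `M𝓕` and `m𝓕` are convex. -/
theorem maxVersion_minVersion_convex {C : Type u} [Category.{v} C] (Φ : C ⥤ Type v)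
    (hfin : ∀ X : C, Finite (Φ.obj X)) (hfaith : Φ.Faithful)
    (hinj : ∀ {X Y : C} (f : X ⟶ Y), Function.Injective (Φ.map f))
    (hmono : ∀ {X Y : C} (f : X ⟶ Y), Mono f)
    (𝓕 : Feature Φ)
    (hiso : ∀ {X Y : C} (f : X ≅ Y) (A : Set (Φ.obj X)), A ∈ 𝓕 X ↔ Φ.map f.hom '' A ∈ 𝓕 Y)
    (hrc : RightContinued Φ 𝓕) :
    ConvexFeature Φ (maxVersion Φ 𝓕) ∧ ConvexFeature Φ (minVersion Φ 𝓕) :=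
  maxVersion_minVersion_convex_general Φ hinj 𝓕 hrc
end

section
/- If 𝓕 is a convex feature, then the steady ip-generator σ^𝓕 is balanced: for any two filtrations F and G that are ε-interleaved, the persistence functions σ^𝓕_F and σ^𝓕_G are ε-compatible, i.e. σ^𝓕_F(u−ε ≤ v+ε) ≤ σ^𝓕_G(u ≤ v) and σ^𝓕_G(u−ε ≤ v+ε) ≤ σ^𝓕_F(u ≤ v) for all u ≤ v. -/
open CategoryTheory

universe u v

/-- An `ε`-interleaving between two filtrations `F` and `G`. -/
structure Interleaving {C : Type u} [Category.{v} C] (F G : ℝ ⥤ C) (ε : ℝ) where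
  hε : 0 ≤ ε
  φ : ∀ w : ℝ, F.obj w ⟶ G.obj (w + ε)
  ψ : ∀ w : ℝ, G.obj w ⟶ F.obj (w + ε)
  comm1 : ∀ w : ℝ, φ w ≫ ψ (w + ε) = F.map (homOfLE (by linarith : w ≤ w + ε + ε))
  comm2 : ∀ w : ℝ, ψ w ≫ φ (w + ε) = G.map (homOfLE (by linarith : w ≤ w + ε + ε))
  nat1 : ∀ (a b : ℝ) (h : a ≤ b),
    F.map (homOfLE h) ≫ φ b = φ a ≫ G.map (homOfLE (by linarith : a + ε ≤ b + ε))
  nat2 : ∀ (a b : ℝ) (h : a ≤ b),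
    G.map (homOfLE h) ≫ ψ b = ψ a ≫ F.map (homOfLE (by linarith : a + ε ≤ b + ε))

/-- The steady generator `σ^𝓕` is balanced: `ε`-interleaved filtrations have
`ε`-compatible steady persistence functions. -/
def SteadyBalanced {C : Type u} [Category.{v} C] (Φ : C ⥤ Type v) (𝓕 : Feature Φ) : Prop :=
  ∀ (F G : ℝ ⥤ C) (ε : ℝ), Nonempty (Interleaving F G ε) → ∀ (a b : ℝ), a ≤ b →
    Nat.card (steadySet Φ 𝓕 F (a - ε) (b + ε)) ≤ Nat.card (steadySet Φ 𝓕 G a b) ∧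
    Nat.card (steadySet Φ 𝓕 G (a - ε) (b + ε)) ≤ Nat.card (steadySet Φ 𝓕 F a b)

/-- The ranging generator `ρ^𝓕` is balanced. -/
def RangingBalanced {C : Type u} [Category.{v} C] (Φ : C ⥤ Type v) (𝓕 : Feature Φ) : Prop :=
  ∀ (F G : ℝ ⥤ C) (ε : ℝ), Nonempty (Interleaving F G ε) → ∀ (a b : ℝ), a ≤ b →
    Nat.card (rangingSet Φ 𝓕 F (a - ε) (b + ε)) ≤ Nat.card (rangingSet Φ 𝓕 G a b) ∧
    Nat.card (rangingSet Φ 𝓕 G (a - ε) (b + ε)) ≤ Nat.card (rangingSet Φ 𝓕 F a b)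

/-- Key step: the interleaving morphism `φ_{a-ε}` induces an injection from
`S^𝓕_F(a-ε ≤ b+ε)` into `S^𝓕_G(a ≤ b)`. -/
lemma steady_card_le {C : Type u} [Category.{v} C] (Φ : C ⥤ Type v)
    (hinj : ∀ {X Y : C} (f : X ⟶ Y), Function.Injective (Φ.map f))
    (𝓕 : Feature Φ) (hconv : ConvexFeature Φ 𝓕)
    (F G : ℝ ⥤ C) (ε : ℝ) (I : Interleaving F G ε) (a b : ℝ) (hab : a ≤ b)
    (hfinG : Finite (Φ.obj (G.obj a))) :
    Nat.card (steadySet Φ 𝓕 F (a - ε) (b + ε)) ≤ Nat.card (steadySet Φ 𝓕 G a b) := by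
  have hε := I.hε
  set m : F.obj (a - ε) ⟶ G.obj a :=
    I.φ (a - ε) ≫ G.map (homOfLE (show a - ε + ε ≤ a by linarith)) with hm
  have hgoal : ∀ A ∈ steadySet Φ 𝓕 F (a - ε) (b + ε),
      Φ.map m '' A ∈ steadySet Φ 𝓕 G a b := by
    intro A hA w haw hwb
    have hA0 : A ∈ 𝓕 (F.obj (a - ε)) := by
      have := hA (a - ε) le_rfl (by linarith)
      simpa using this
    set ι : F.obj (a - ε) ⟶ G.obj w :=
      I.φ (a - ε) ≫ G.map (homOfLE (show a - ε + ε ≤ w by linarith)) with hι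
    have hcomp : ι ≫ I.ψ w = F.map (homOfLE (show a - ε ≤ w + ε by linarith)) := by
      rw [hι, Category.assoc, I.nat2 (a - ε + ε) w (by linarith), ← Category.assoc,
        I.comm1 (a - ε), ← F.map_comp]
      congr 1
    have hmem : Φ.map (ι ≫ I.ψ w) '' A ∈ 𝓕 (F.obj (w + ε)) := by
      rw [hcomp]
      exact hA (w + ε) (by linarith) (by linarith)
    have hres : Φ.map ι '' A ∈ 𝓕 (G.obj w) := hconv ι (I.ψ w) A hA0 hmem
    have heq : m ≫ G.map (homOfLE haw) = ι := by
      rw [hm, hι, Category.assoc, ← G.map_comp]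
      congr 1
    have himg : Φ.map (G.map (homOfLE haw)) '' (Φ.map m '' A) = Φ.map ι '' A := by
      rw [← Set.image_comp, ← types_comp, ← Φ.map_comp, heq]
    rw [himg]
    exact hres
  have hfinS : Finite (steadySet Φ 𝓕 G a b) := Subtype.finite
  exact Nat.card_le_card_of_injective
    (fun A : steadySet Φ 𝓕 F (a - ε) (b + ε) => ⟨Φ.map m '' A.1, hgoal A.1 A.2⟩)
    (by
      rintro ⟨A, hA⟩ ⟨B, hB⟩ h
      simp only [Subtype.mk.injEq] at h
      exact Subtype.ext (Set.image_injective.mpr (hinj m) h))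

/-- convex features induce balanced steady generators. -/
theorem convex_implies_steadyBalanced {C : Type u} [Category.{v} C] (Φ : C ⥤ Type v)
    (hfin : ∀ X : C, Finite (Φ.obj X)) (hfaith : Φ.Faithful)
    (hinj : ∀ {X Y : C} (f : X ⟶ Y), Function.Injective (Φ.map f))
    (hmono : ∀ {X Y : C} (f : X ⟶ Y), Mono f)
    (𝓕 : Feature Φ)
    (hiso : ∀ {X Y : C} (f : X ≅ Y) (A : Set (Φ.obj X)), A ∈ 𝓕 X ↔ Φ.map f.hom '' A ∈ 𝓕 Y)
    (hconv : ConvexFeature Φ 𝓕) :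
    SteadyBalanced Φ 𝓕 := by
  rintro F G ε ⟨I⟩ a b hab
  have I' : Interleaving G F ε :=
    ⟨I.hε, I.ψ, I.φ, I.comm2, I.comm1, I.nat2, I.nat1⟩
  exact ⟨steady_card_le Φ hinj 𝓕 hconv F G ε I a b hab (hfin _),
    steady_card_le Φ hinj 𝓕 hconv G F ε I' a b hab (hfin _)⟩
end

section
/- If a feature 𝓕 is not convex, then its steady generator σ^𝓕 is not balanced: there exist two filtrations F and G that are 1-interleaved but such that |S^𝓕_F(1 ≤ 5)| < |S^𝓕_G(0 ≤ 6)|, so σ^𝓕_F and σ^𝓕_G are not 1-compatible. -/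
open CategoryTheory

universe u v

/-! Both filtrations are reindexings of the one diagram `X ⟶ X' ⟶ X''` along step functions
`ℝ → Fin 3`, so they are `1`-interleaved for free, `Fin 3` being thin. A steady set of `F` over
`[1, 5]` has to stay in `𝓕` at `X`, `X'` and `X''`, one of `G` over `[0, 6]` only at `X` and `X''`.
The non-convexity witness `A` is steady for `G` but not for `F`, and all these collections are
finite, so the count for `G` is strictly larger. -/

section

variable {C : Type u} [Category.{v} C]

/-- All the required squares commute because `P` is thin. -/
def Interleaving.ofMonotoneComp {P : Type*} [Preorder P] (T : P ⥤ C) {s t : ℝ → P}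
    (hs : Monotone s) (ht : Monotone t) {ε : ℝ} (hε : 0 ≤ ε)
    (hst : ∀ w, s w ≤ t (w + ε)) (hts : ∀ w, t w ≤ s (w + ε)) :
    Interleaving (hs.functor ⋙ T) (ht.functor ⋙ T) ε where
  hε := hε
  φ w := T.map (homOfLE (hst w))
  ψ w := T.map (homOfLE (hts w))
  comm1 _ := (T.map_comp _ _).symm
  comm2 _ := (T.map_comp _ _).symm
  nat1 _ _ _ := by simp only [Functor.comp_map, ← T.map_comp]; rfl
  nat2 _ _ _ := by simp only [Functor.comp_map, ← T.map_comp]; rfl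

variable {P : Type*} [Preorder P] (Φ : C ⥤ Type v) (𝓕 : Feature Φ)

def diagramSteadySet (T : P ⥤ C) (i : P) (S : Set P) : Set (Set (Φ.obj (T.obj i))) :=
  {B | ∀ j ∈ S, ∀ h : i ≤ j, Φ.map (T.map (homOfLE h)) '' B ∈ 𝓕 (T.obj j)}

lemma steadySet_comp_monotone (T : P ⥤ C) {s : ℝ → P} (hs : Monotone s) (a b : ℝ) :
    steadySet Φ 𝓕 (hs.functor ⋙ T) a b = diagramSteadySet Φ 𝓕 T (s a) (s '' Set.Icc a b) := by
  ext B
  constructor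
  · rintro hB _ ⟨w, ⟨haw, hwb⟩, rfl⟩ _
    exact hB w haw hwb
  · intro hB w haw hwb
    exact hB (s w) ⟨w, ⟨haw, hwb⟩, rfl⟩ (hs haw)

-- Stated for an arbitrary `i` with `s a = i`: rewriting `s a` directly is blocked by the
-- dependent type `Set (Set (Φ.obj (T.obj (s a))))`.
lemma card_steadySet_comp_monotone (T : P ⥤ C) {s : ℝ → P} (hs : Monotone s) {a : ℝ} (b : ℝ)
    {i : P} (hi : s a = i) :
    Nat.card (steadySet Φ 𝓕 (hs.functor ⋙ T) a b) =
      (diagramSteadySet Φ 𝓕 T i (s '' Set.Icc a b)).ncard := by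
  subst hi
  rw [steadySet_comp_monotone]
  exact Nat.card_coe_set_eq _

variable {Φ 𝓕}

lemma diagramSteadySet_anti {T : P ⥤ C} {i : P} {S S' : Set P} (hS : S ⊆ S') :
    diagramSteadySet Φ 𝓕 T i S' ⊆ diagramSteadySet Φ 𝓕 T i S :=
  fun _ hB j hj => hB j (hS hj)

lemma image_map_homOfLE_self_mem {T : P ⥤ C} {i : P} {B : Set (Φ.obj (T.obj i))}
    (hB : B ∈ 𝓕 (T.obj i)) (h : i ≤ i) : Φ.map (T.map (homOfLE h)) '' B ∈ 𝓕 (T.obj i) := by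
  rwa [show homOfLE h = 𝟙 i from rfl, T.map_id, Φ.map_id, types_id, Set.image_id]

lemma diagramSteadySet_mk₂_ssubset {X Y Z : C} {f : X ⟶ Y} {g : Y ⟶ Z} {A : Set (Φ.obj X)}
    (hA : A ∈ 𝓕 X) (hAfg : Φ.map (f ≫ g) '' A ∈ 𝓕 Z) (hAf : Φ.map f '' A ∉ 𝓕 Y) :
    diagramSteadySet Φ 𝓕 (ComposableArrows.mk₂ f g) 0 {0, 1, 2} ⊂
      diagramSteadySet Φ 𝓕 (ComposableArrows.mk₂ f g) 0 {0, 2} := by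
  have hsub : ({0, 2} : Set (Fin 3)) ⊆ {0, 1, 2} :=
    Set.insert_subset_insert (Set.subset_insert _ _)
  refine (Set.ssubset_iff_of_subset (diagramSteadySet_anti hsub)).2
    ⟨A, ?_, fun h => hAf (h 1 (by simp) (by decide))⟩
  rintro j (rfl | rfl) h
  · exact image_map_homOfLE_self_mem hA h
  · exact hAfg

end

noncomputable def stepF (w : ℝ) : Fin 3 := if w < 3 then 0 else if w < 5 then 1 else 2

noncomputable def stepG (w : ℝ) : Fin 3 := if w < 4 then 0 else 2

lemma stepF_monotone : Monotone stepF := by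
  intro a b hab
  unfold stepF
  split_ifs <;> first | decide | (exfalso; linarith)

lemma stepG_monotone : Monotone stepG := by
  intro a b hab
  unfold stepG
  split_ifs <;> first | decide | (exfalso; linarith)

lemma stepF_le_stepG_add_one (w : ℝ) : stepF w ≤ stepG (w + 1) := by
  unfold stepF stepG
  split_ifs <;> first | decide | (exfalso; linarith)

lemma stepG_le_stepF_add_one (w : ℝ) : stepG w ≤ stepF (w + 1) := by
  unfold stepF stepG
  split_ifs <;> first | decide | (exfalso; linarith)

lemma stepF_one : stepF 1 = 0 := by norm_num [stepF]

lemma stepG_zero : stepG 0 = 0 := by norm_num [stepG]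

lemma subset_image_stepF : {0, 1, 2} ⊆ stepF '' Set.Icc 1 5 := by
  rintro j (rfl | rfl | rfl)
  · exact ⟨1, by norm_num, by norm_num [stepF]⟩
  · exact ⟨3, by norm_num, by norm_num [stepF]⟩
  · exact ⟨5, by norm_num, by norm_num [stepF]⟩

lemma image_stepG_subset : stepG '' Set.Icc 0 6 ⊆ {0, 2} := by
  rintro _ ⟨w, -, rfl⟩
  unfold stepG
  split_ifs <;> simp

theorem not_convex_implies_not_steadyBalanced_general {C : Type u} [Category.{v} C] (Φ : C ⥤ Type v)
    (hfin : ∀ X : C, Finite (Φ.obj X))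
    (𝓕 : Feature Φ)
    (hconv : ¬ ConvexFeature Φ 𝓕) :
    ∃ (F G : ℝ ⥤ C), Nonempty (Interleaving F G 1) ∧
      Nat.card (steadySet Φ 𝓕 F 1 5) < Nat.card (steadySet Φ 𝓕 G 0 6) := by
  simp only [ConvexFeature, not_forall] at hconv
  obtain ⟨X, X', X'', ι, ι', A, hA, hAιι', hAι⟩ := hconv
  let T := ComposableArrows.mk₂ ι ι'
  refine ⟨stepF_monotone.functor ⋙ T, stepG_monotone.functor ⋙ T,
    ⟨.ofMonotoneComp T _ _ zero_le_one stepF_le_stepG_add_one stepG_le_stepF_add_one⟩, ?_⟩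
  rw [card_steadySet_comp_monotone Φ 𝓕 T _ 5 stepF_one,
    card_steadySet_comp_monotone Φ 𝓕 T _ 6 stepG_zero]
  have : Finite (Φ.obj X) := hfin X
  exact Set.ncard_lt_ncard <| (diagramSteadySet_anti subset_image_stepF).trans_ssubset <|
    (diagramSteadySet_mk₂_ssubset hA hAιι' hAι).trans_subset
      (diagramSteadySet_anti image_stepG_subset)

/-- if `𝓕` is not convex, then `σ^𝓕` is not balanced: there are
`1`-interleaved filtrations whose steady functions are not `1`-compatible. -/
theorem not_convex_implies_not_steadyBalanced {C : Type u} [Category.{v} C] (Φ : C ⥤ Type v)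
    (hfin : ∀ X : C, Finite (Φ.obj X)) (hfaith : Φ.Faithful)
    (hinj : ∀ {X Y : C} (f : X ⟶ Y), Function.Injective (Φ.map f))
    (hmono : ∀ {X Y : C} (f : X ⟶ Y), Mono f)
    (𝓕 : Feature Φ)
    (hiso : ∀ {X Y : C} (f : X ≅ Y) (A : Set (Φ.obj X)), A ∈ 𝓕 X ↔ Φ.map f.hom '' A ∈ 𝓕 Y)
    (hconv : ¬ ConvexFeature Φ 𝓕) :
    ∃ (F G : ℝ ⥤ C), Nonempty (Interleaving F G 1) ∧
      Nat.card (steadySet Φ 𝓕 F 1 5) < Nat.card (steadySet Φ 𝓕 G 0 6) :=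
  not_convex_implies_not_steadyBalanced_general Φ hfin 𝓕 hconv
end

section
/- The hypergraph categories Hgph^≤_m and Hgph^=_m satisfy the triangle condition: whenever ι : H → H'' and ι' : H' → H'' are monomorphisms in the category and χ : Φ(H) → Φ(H') is an injective set map with Φι = Φι' ∘ χ, then χ itself is (the underlying map of) a monomorphism of the category from H to H', so there is a monomorphism φ : H → H' with ι = ι' ∘ φ. -/
/-- A hypergraph: finite sets of vertices and hyperedges, with a nonempty
incidence set of vertices for every hyperedge. -/
structure FinHypergraph where
  V : Type
  E : Type
  finV : Finite V
  finE : Finite E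
  inc : E → Set V
  inc_nonempty : ∀ e, (inc e).Nonempty

/-- A hypergraph morphism: maps vertices to vertices, hyperedges to hyperedges,
and preserves incidence. -/
structure HGHom (H H' : FinHypergraph) where
  fv : H.V → H'.V
  fe : H.E → H'.E
  incid : ∀ (e : H.E) (v : H.V), v ∈ H.inc e → fv v ∈ H'.inc (fe e)

/-- Composition of hypergraph morphisms. -/
def HGHom.comp {H H' H'' : FinHypergraph} (f : HGHom H H') (g : HGHom H' H'') : HGHom H H'' where
  fv := g.fv ∘ f.fv
  fe := g.fe ∘ f.fe
  incid := fun e v hv => g.incid _ _ (f.incid e v hv)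

/-- The identity hypergraph morphism. -/
def HGHom.id (H : FinHypergraph) : HGHom H H :=
  ⟨fun v => v, fun e => e, fun _ _ h => h⟩

/-- A hypergraph morphism is a monomorphism if it is left-cancellable. -/
def IsHGMono {H H' : FinHypergraph} (f : HGHom H H') : Prop :=
  ∀ (K : FinHypergraph) (g g' : HGHom K H), g.comp f = g'.comp f → g = g'

/-- The underlying map `V ⊔ E → V' ⊔ E'` of a hypergraph morphism. -/
def HGHom.toFun {H H' : FinHypergraph} (f : HGHom H H') : H.V ⊕ H.E → H'.V ⊕ H'.E :=
  Sum.map f.fv f.fe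

/-- A morphism reflects incidence (`Hgph^≤`): `f(v) ∈ f(e)` implies `v ∈ e`. -/
def HGHom.Leq {H H' : FinHypergraph} (f : HGHom H H') : Prop :=
  ∀ (e : H.E) (v : H.V), f.fv v ∈ H'.inc (f.fe e) → v ∈ H.inc e

/-- A morphism is injective on vertices and hyperedges. -/
def HGHom.Inj {H H' : FinHypergraph} (f : HGHom H H') : Prop :=
  Function.Injective f.fv ∧ Function.Injective f.fe

/-- A morphism preserves hyperedge sizes (`Hgph^=`). -/
def HGHom.SizeEq {H H' : FinHypergraph} (f : HGHom H H') : Prop :=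
  ∀ e : H.E, Nat.card (H'.inc (f.fe e)) = Nat.card (H.inc e)

/-!
`Φι = Φι' ∘ χ` forces `χ` to send vertices to vertices and hyperedges to hyperedges, so `χ` is a
pair of maps `(a, b)` with `ι = (a, b) ≫ ι'` on both components. Incidence is preserved by `(a, b)`
because `ι` preserves it and `ι'` reflects it, and reflected because `ι = (a, b) ≫ ι'` reflects it;
hyperedge sizes are preserved because `ι` and `ι'` both preserve them.
-/

theorem Sum.exists_eq_map_of_map_eq_map_comp {α β α' β' γ δ : Type*} {f : α → γ} {g : β → δ}
    {f' : α' → γ} {g' : β' → δ} {χ : α ⊕ β → α' ⊕ β'} (h : Sum.map f g = Sum.map f' g' ∘ χ) :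
    ∃ (a : α → α') (b : β → β'), χ = Sum.map a b ∧ f = f' ∘ a ∧ g = g' ∘ b := by
  have hl : ∀ x, ∃ y, χ (.inl x) = .inl y ∧ f' y = f x := by
    intro x
    have hx := congrFun h (.inl x)
    rcases hχ : χ (.inl x) with y | y <;> simp_all [eq_comm]
  have hr : ∀ x, ∃ y, χ (.inr x) = .inr y ∧ g' y = g x := by
    intro x
    have hx := congrFun h (.inr x)
    rcases hχ : χ (.inr x) with y | y <;> simp_all [eq_comm]
  choose a ha hfa using hl
  choose b hb hgb using hr
  refine ⟨a, b, ?_, funext fun x => (hfa x).symm, funext fun x => (hgb x).symm⟩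
  ext1 (x | x)
  exacts [ha x, hb x]

namespace HGHom

variable {H H' H'' : FinHypergraph}

@[ext]
theorem ext {f g : HGHom H H'} (hv : f.fv = g.fv) (he : f.fe = g.fe) : f = g := by
  cases f
  cases g
  congr

theorem inj_iff_injective_toFun (f : HGHom H H') : f.Inj ↔ Function.Injective f.toFun :=
  Sum.map_injective.symm

theorem Leq.of_comp {φ : HGHom H H'} {ψ : HGHom H' H''} (h : (φ.comp ψ).Leq) : φ.Leq :=
  fun e v hv => h e v (ψ.incid _ _ hv)

theorem SizeEq.of_comp {φ : HGHom H H'} {ψ : HGHom H' H''} (h : (φ.comp ψ).SizeEq)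
    (hψ : ψ.SizeEq) : φ.SizeEq :=
  fun e => (hψ (φ.fe e)).symm.trans (h e)

theorem exists_comp_eq_of_toFun_eq_comp {ι : HGHom H H''} {ι' : HGHom H' H''} (hι' : ι'.Leq)
    {χ : H.V ⊕ H.E → H'.V ⊕ H'.E} (h : ι.toFun = ι'.toFun ∘ χ) :
    ∃ φ : HGHom H H', φ.toFun = χ ∧ φ.comp ι' = ι := by
  obtain ⟨a, b, rfl, ha, hb⟩ := Sum.exists_eq_map_of_map_eq_map_comp h
  have incid (e : H.E) (v : H.V) (hv : v ∈ H.inc e) : a v ∈ H'.inc (b e) :=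
    hι' _ _ (by simpa only [ha, hb, Function.comp_apply] using ι.incid e v hv)
  exact ⟨⟨a, b, incid⟩, rfl, ext ha.symm hb.symm⟩

end HGHom

/-- the categories `Hgph^≤_m` and `Hgph^=_m` satisfy the triangle
condition: a factorization of underlying injections lifts to a monomorphism of the
corresponding category. -/
theorem hypergraph_triangle_condition :
    (∀ (H H' H'' : FinHypergraph) (ι : HGHom H H'') (ι' : HGHom H' H''),
        ι.Inj → ι'.Inj → ι.Leq → ι'.Leq →
        ∀ χ : H.V ⊕ H.E → H'.V ⊕ H'.E, Function.Injective χ →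
          ι.toFun = ι'.toFun ∘ χ →
          ∃ φ : HGHom H H', φ.Inj ∧ φ.Leq ∧ φ.toFun = χ ∧ ι = φ.comp ι') ∧
    (∀ (H H' H'' : FinHypergraph) (ι : HGHom H H'') (ι' : HGHom H' H''),
        ι.Inj → ι'.Inj → ι.Leq → ι'.Leq → ι.SizeEq → ι'.SizeEq →
        ∀ χ : H.V ⊕ H.E → H'.V ⊕ H'.E, Function.Injective χ →
          ι.toFun = ι'.toFun ∘ χ →
          ∃ φ : HGHom H H', φ.Inj ∧ φ.Leq ∧ φ.SizeEq ∧ φ.toFun = χ ∧ ι = φ.comp ι') := by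
  have lift : ∀ {H H' H'' : FinHypergraph} (ι : HGHom H H'') (ι' : HGHom H' H''),
      ι.Leq → ι'.Leq → ∀ χ : H.V ⊕ H.E → H'.V ⊕ H'.E, Function.Injective χ →
        ι.toFun = ι'.toFun ∘ χ →
        ∃ φ : HGHom H H', φ.Inj ∧ φ.Leq ∧ φ.toFun = χ ∧ ι = φ.comp ι' := by
    intro H H' H'' ι ι' hL hL' χ hχ hfac
    obtain ⟨φ, rfl, rfl⟩ := HGHom.exists_comp_eq_of_toFun_eq_comp hL' hfac
    exact ⟨φ, (φ.inj_iff_injective_toFun).2 hχ, .of_comp hL, rfl, rfl⟩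
  refine ⟨fun H H' H'' ι ι' _ _ hL hL' χ hχ hfac => lift ι ι' hL hL' χ hχ hfac, ?_⟩
  intro H H' H'' ι ι' _ _ hL hL' hS hS' χ hχ hfac
  obtain ⟨φ, hinj, hleq, hφχ, rfl⟩ := lift ι ι' hL hL' χ hχ hfac
  exact ⟨φ, hinj, hleq, .of_comp hS hS', hφχ, rfl⟩
end

section
/- Characterization of ε-interleaving for weighted graphs: let (X,f) and (X',g) be weighted graphs with isomorphic underlying graphs and induced sublevel filtrations F and G. Then F and G are ε-interleaved if and only if there exists a graph isomorphism φ : X → X' with sup_{x ∈ X} |f(x) − g(φ(x))| ≤ ε. -/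
/-- A weighted graph: a finite simple graph with weights on vertices and edges such
that the weight of a vertex is at most the weight of any incident edge. -/
structure WeightedGraph where
  V : Type
  [fin : Fintype V]
  G : SimpleGraph V
  fv : V → ℝ
  fe : Sym2 V → ℝ
  compat : ∀ e ∈ G.edgeSet, ∀ v ∈ e, fv v ≤ fe e

attribute [instance] WeightedGraph.fin

/-- The sublevel filtration of a weighted graph, as a subgraph at each level. -/
def WeightedGraph.filt (W : WeightedGraph) (u : ℝ) : W.G.Subgraph where
  verts := {v | W.fv v ≤ u}
  Adj a b := W.G.Adj a b ∧ W.fe s(a, b) ≤ u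
  adj_sub h := h.1
  edge_vert h := le_trans
    (W.compat _ ((W.G.mem_edgeSet).mpr h.1) _ (Sym2.mem_mk_left _ _)) h.2
  symm := ⟨fun a b h => ⟨h.1.symm, by rw [Sym2.eq_swap]; exact h.2⟩⟩

theorem WeightedGraph.filt_mono (W : WeightedGraph) {u v : ℝ} (h : u ≤ v) :
    W.filt u ≤ W.filt v :=
  ⟨fun x hv => (le_trans (hv : W.fv x ≤ u) h : W.fv x ≤ v), by
    intro a b hab
    have hab' : W.G.Adj a b ∧ W.fe s(a, b) ≤ u := hab
    exact (⟨hab'.1, le_trans hab'.2 h⟩ : W.G.Adj a b ∧ W.fe s(a, b) ≤ v)⟩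

/-- An `ε`-interleaving between the sublevel filtrations of two weighted graphs:
families of injective graph homomorphisms commuting with the inclusions. -/
structure GInterleaving (W W' : WeightedGraph) (ε : ℝ) where
  hε : 0 ≤ ε
  φ : ∀ w : ℝ, (W.filt w).coe →g (W'.filt (w + ε)).coe
  ψ : ∀ w : ℝ, (W'.filt w).coe →g (W.filt (w + ε)).coe
  injφ : ∀ w, Function.Injective (φ w)
  injψ : ∀ w, Function.Injective (ψ w)
  comm1 : ∀ w : ℝ, (ψ (w + ε)).comp (φ w) =
    SimpleGraph.Subgraph.inclusion (W.filt_mono (by linarith : w ≤ w + ε + ε))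
  comm2 : ∀ w : ℝ, (φ (w + ε)).comp (ψ w) =
    SimpleGraph.Subgraph.inclusion (W'.filt_mono (by linarith : w ≤ w + ε + ε))
  nat1 : ∀ (a b : ℝ) (h : a ≤ b),
    (φ b).comp (SimpleGraph.Subgraph.inclusion (W.filt_mono h)) =
      (SimpleGraph.Subgraph.inclusion
        (W'.filt_mono (by linarith : a + ε ≤ b + ε))).comp (φ a)
  nat2 : ∀ (a b : ℝ) (h : a ≤ b),
    (ψ b).comp (SimpleGraph.Subgraph.inclusion (W'.filt_mono h)) =
      (SimpleGraph.Subgraph.inclusion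
        (W.filt_mono (by linarith : a + ε ≤ b + ε))).comp (ψ a)

/-!
By naturality, the interleaving map `φ_w` sends a vertex to the same vertex of `X'` at every
level `w` where it is defined, so the `φ_w` (and likewise the `ψ_w`) glue to single maps
`Φ : X → X'` and `Ψ : X' → X`; the triangle identities make them mutually inverse, hence a
graph isomorphism. A vertex or edge `σ` lies in `F_{f σ}`, so `Φ σ` lies in
`G_{f σ + ε}`, i.e. `g (Φ σ) ≤ f σ + ε`, and symmetrically through `Ψ`. Conversely, an
isomorphism moving weights by at most `ε` maps `F_w` into `G_{w + ε}` and its inverse maps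
`G_w` into `F_{w + ε}`; all required identities then hold pointwise.
-/

namespace WeightedGraph

variable {W W' : WeightedGraph}

theorem mem_filt_verts {u : ℝ} {v : W.V} : v ∈ (W.filt u).verts ↔ W.fv v ≤ u := Iff.rfl

def DistortionLE (φ : W.G ≃g W'.G) (ε : ℝ) : Prop :=
  (∀ v : W.V, |W.fv v - W'.fv (φ v)| ≤ ε) ∧
    ∀ e ∈ W.G.edgeSet, |W.fe e - W'.fe (Sym2.map φ e)| ≤ ε

namespace DistortionLE

variable {φ : W.G ≃g W'.G} {ε : ℝ}

theorem fv_le (h : DistortionLE φ ε) (v : W.V) : W'.fv (φ v) ≤ W.fv v + ε := by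
  linarith [(abs_sub_le_iff.1 (h.1 v)).2]

theorem fe_le (h : DistortionLE φ ε) {a b : W.V} (hab : W.G.Adj a b) :
    W'.fe s(φ a, φ b) ≤ W.fe s(a, b) + ε := by
  have := (abs_sub_le_iff.1 (h.2 s(a, b) hab)).2
  rw [Sym2.map_mk] at this
  linarith

theorem symm (h : DistortionLE φ ε) : DistortionLE φ.symm ε := by
  refine ⟨fun v => ?_, fun e he => ?_⟩
  · simpa [abs_sub_comm] using h.1 (φ.symm v)
  · induction e using Sym2.ind with
    | _ a b =>
      have hab : W.G.Adj (φ.symm a) (φ.symm b) := φ.symm.map_rel_iff.2 he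
      simpa [abs_sub_comm] using h.2 s(φ.symm a, φ.symm b) hab

def filtHom (h : DistortionLE φ ε) (w : ℝ) : (W.filt w).coe →g (W'.filt (w + ε)).coe where
  toFun x := ⟨φ x, (h.fv_le x).trans (add_le_add_left x.2 ε)⟩
  map_rel' hxy := ⟨φ.map_rel_iff.2 hxy.1, (h.fe_le hxy.1).trans (by linarith [hxy.2])⟩

end DistortionLE

end WeightedGraph

namespace GInterleaving

open WeightedGraph

variable {W W' : WeightedGraph} {ε : ℝ}

def ofDistortionLE {φ : W.G ≃g W'.G} (hε : 0 ≤ ε) (h : DistortionLE φ ε) :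
    GInterleaving W W' ε where
  hε := hε
  φ := h.filtHom
  ψ := h.symm.filtHom
  injφ _ _ _ hxy := Subtype.ext (φ.injective (congrArg Subtype.val hxy))
  injψ _ _ _ hxy := Subtype.ext (φ.symm.injective (congrArg Subtype.val hxy))
  comm1 _ := RelHom.ext fun x => Subtype.ext (φ.symm_apply_apply x.1)
  comm2 _ := RelHom.ext fun x => Subtype.ext (φ.apply_symm_apply x.1)
  nat1 _ _ _ := rfl
  nat2 _ _ _ := rfl

variable (I : GInterleaving W W' ε)

def symm : GInterleaving W' W ε :=
  ⟨I.hε, I.ψ, I.φ, I.injψ, I.injφ, I.comm2, I.comm1, I.nat2, I.nat1⟩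

/-- The glued vertex map, read off at the lowest level where the vertex appears
(`φ_apply_val` shows every level gives the same vertex). -/
def vertexMap (v : W.V) : W'.V :=
  (I.φ (W.fv v) ⟨v, mem_filt_verts.2 le_rfl⟩).1

theorem φ_apply_val (w : ℝ) (x : (W.filt w).verts) : (I.φ w x).1 = I.vertexMap x.1 :=
  congrArg Subtype.val (DFunLike.congr_fun (I.nat1 (W.fv x) w x.2) ⟨x, mem_filt_verts.2 le_rfl⟩)

theorem fv_vertexMap_le (v : W.V) : W'.fv (I.vertexMap v) ≤ W.fv v + ε :=
  (I.φ (W.fv v) ⟨v, mem_filt_verts.2 le_rfl⟩).2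

theorem symm_vertexMap_vertexMap (v : W.V) : I.symm.vertexMap (I.vertexMap v) = v :=
  (I.symm.φ_apply_val _ _).symm.trans
    (congrArg Subtype.val (DFunLike.congr_fun (I.comm1 (W.fv v)) ⟨v, mem_filt_verts.2 le_rfl⟩))

theorem adj_vertexMap {a b : W.V} (hab : W.G.Adj a b) :
    W'.G.Adj (I.vertexMap a) (I.vertexMap b) ∧
      W'.fe s(I.vertexMap a, I.vertexMap b) ≤ W.fe s(a, b) + ε := by
  have ha : W.fv a ≤ W.fe s(a, b) := W.compat _ hab a (Sym2.mem_mk_left a b)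
  have hb : W.fv b ≤ W.fe s(a, b) := W.compat _ hab b (Sym2.mem_mk_right a b)
  have h := (I.φ (W.fe s(a, b))).map_rel
    (show (W.filt (W.fe s(a, b))).coe.Adj ⟨a, ha⟩ ⟨b, hb⟩ from ⟨hab, le_rfl⟩)
  rwa [SimpleGraph.Subgraph.coe_adj, I.φ_apply_val, I.φ_apply_val] at h

def iso : W.G ≃g W'.G where
  toFun := I.vertexMap
  invFun := I.symm.vertexMap
  left_inv := I.symm_vertexMap_vertexMap
  right_inv := I.symm.symm_vertexMap_vertexMap
  map_rel_iff' {a b} := ⟨fun h => by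
    simpa only [symm_vertexMap_vertexMap] using
      (I.symm.adj_vertexMap (a := I.vertexMap a) (b := I.vertexMap b) h).1,
    fun h => (I.adj_vertexMap h).1⟩

theorem distortionLE_iso : DistortionLE I.iso ε := by
  refine ⟨fun v => abs_sub_le_iff.2 ⟨?_, ?_⟩, fun e he => ?_⟩
  · have := I.symm.fv_vertexMap_le (I.vertexMap v)
    rw [symm_vertexMap_vertexMap] at this
    exact sub_le_iff_le_add'.2 this
  · exact sub_le_iff_le_add'.2 (I.fv_vertexMap_le v)
  · induction e using Sym2.ind with
    | _ a b =>
      have hab' := (I.adj_vertexMap he).1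
      have := (I.symm.adj_vertexMap hab').2
      rw [symm_vertexMap_vertexMap, symm_vertexMap_vertexMap] at this
      exact abs_sub_le_iff.2 ⟨sub_le_iff_le_add'.2 this,
        sub_le_iff_le_add'.2 (I.adj_vertexMap he).2⟩

end GInterleaving

theorem weightedGraph_interleaving_iff_general (W W' : WeightedGraph) (ε : ℝ) (hε : 0 ≤ ε) :
    Nonempty (GInterleaving W W' ε) ↔
      ∃ φ : W.G ≃g W'.G, (∀ v : W.V, |W.fv v - W'.fv (φ v)| ≤ ε) ∧
        ∀ e ∈ W.G.edgeSet, |W.fe e - W'.fe (Sym2.map φ e)| ≤ ε :=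
  ⟨fun ⟨I⟩ => ⟨I.iso, I.distortionLE_iso⟩, fun ⟨_, h⟩ => ⟨.ofDistortionLE hε h⟩⟩

/-- for weighted graphs with isomorphic underlying graphs, the
sublevel filtrations are `ε`-interleaved iff there is a graph isomorphism moving
every weight by at most `ε`. -/
theorem weightedGraph_interleaving_iff (W W' : WeightedGraph) (ε : ℝ) (hε : 0 ≤ ε)
    (hiso : Nonempty (W.G ≃g W'.G)) :
    Nonempty (GInterleaving W W' ε) ↔
      ∃ φ : W.G ≃g W'.G, (∀ v : W.V, |W.fv v - W'.fv (φ v)| ≤ ε) ∧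
        ∀ e ∈ W.G.edgeSet, |W.fe e - W'.fe (Sym2.map φ e)| ≤ ε :=
  weightedGraph_interleaving_iff_general W W' ε hε
end

section
/- Tame filtrations have finite steady/ranging persistence diagrams: if F is a tame filtration (finitely many critical values), then the persistence diagram of σ^𝓕_F (respectively ρ^𝓕_F) has finitely many cornerpoints off the diagonal, each with finite multiplicity. -/
open CategoryTheory

universe u v

/-- `a` is a critical value of the filtration `F`. -/
def IsCritical {C : Type u} [Category.{v} C] (F : ℝ ⥤ C) (a : ℝ) : Prop :=
  ∀ δ : ℝ, 0 < δ → ∃ (x y : ℝ) (h : x ≤ y),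
    a - δ < x ∧ y < a + δ ∧ ¬ IsIso (F.map (homOfLE h))

/-- A filtration is tame if it has finitely many critical values. -/
def Tame {C : Type u} [Category.{v} C] (F : ℝ ⥤ C) : Prop :=
  {a : ℝ | IsCritical F a}.Finite

/-- The multiplicity of a point `(a, b)` for a persistence function `p`:
the minimum, over disjoint connected neighborhoods of `a` and `b`, of the usual
alternating sum. -/
noncomputable def mult (p : ℝ → ℝ → ℤ) (a b : ℝ) : ℤ :=
  sInf {n : ℤ | ∃ x y z t : ℝ, x < a ∧ a < y ∧ y ≤ z ∧ z < b ∧ b < t ∧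
    n = p y z - p x z - p y t + p x t}

section Aux
variable {C : Type u} [Category.{v} C] (Φ : C ⥤ Type v) (F : ℝ ⥤ C)

def Window (F : ℝ ⥤ C) (a δ : ℝ) : Prop :=
  ∀ (u v : ℝ) (h : u ≤ v), a - δ < u → v < a + δ → IsIso (F.map (homOfLE h))

lemma exists_window {a : ℝ} (h : ¬ IsCritical F a) : ∃ δ > 0, Window F a δ := by
  unfold IsCritical at h
  push_neg at h
  obtain ⟨δ, hδ, hw⟩ := h
  exact ⟨δ, hδ, fun u v huv h1 h2 => hw u v huv h1 h2⟩

lemma image_inv_image {X Y : C} (g : X ⟶ Y) [IsIso g] (B : Set (Φ.obj Y)) :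
    Φ.map g '' (Φ.map (inv g) '' B) = B := by
  rw [Set.image_image]
  simp only [← FunctorToTypes.map_comp_apply, IsIso.inv_hom_id, FunctorToTypes.map_id_apply,
    Set.image_id']

lemma map_map' {u v w : ℝ} (h1 : u ≤ v) (h2 : v ≤ w) (A : Set (Φ.obj (F.obj u))) :
    Φ.map (F.map (homOfLE (h1.trans h2))) '' A
      = Φ.map (F.map (homOfLE h2)) '' (Φ.map (F.map (homOfLE h1)) '' A) := by
  rw [Set.image_image]
  have : F.map (homOfLE (h1.trans h2)) = F.map (homOfLE h1) ≫ F.map (homOfLE h2) := by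
    rw [← F.map_comp]; rfl
  rw [this, Φ.map_comp]; rfl

lemma map_refl' (u : ℝ) (A : Set (Φ.obj (F.obj u))) :
    Φ.map (F.map (homOfLE (le_refl u))) '' A = A := by
  have : homOfLE (le_refl u) = 𝟙 u := rfl
  rw [this, F.map_id, Φ.map_id]; simp

variable (𝓕 : Feature Φ)
    (hiso : ∀ {X Y : C} (f : X ≅ Y) (A : Set (Φ.obj X)), A ∈ 𝓕 X ↔ Φ.map f.hom '' A ∈ 𝓕 Y)

include hiso in
lemma mem_iff_of_isIso {X Y : C} (g : X ⟶ Y) [IsIso g] (A : Set (Φ.obj X)) :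
    A ∈ 𝓕 X ↔ Φ.map g '' A ∈ 𝓕 Y := by
  simpa using hiso (asIso g) A

include hiso in
lemma steady_left {a δ x y z : ℝ} (win : Window F a δ)
    (hxy : x ≤ y) (hyz : y ≤ z) (hx : a - δ < x) (hy : y < a + δ) :
    steadySet Φ 𝓕 F y z = Set.image (Φ.map (F.map (homOfLE hxy))) '' steadySet Φ 𝓕 F x z := by
  ext B
  constructor
  · intro hB
    haveI : IsIso (F.map (homOfLE hxy)) := win x y hxy hx hy
    set A : Set (Φ.obj (F.obj x)) := Φ.map (inv (F.map (homOfLE hxy))) '' B with hA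
    have back : Φ.map (F.map (homOfLE hxy)) '' A = B :=
      image_inv_image Φ (F.map (homOfLE hxy)) B
    have hBy : B ∈ 𝓕 (F.obj y) := by
      have := hB y le_rfl hyz
      rwa [map_refl'] at this
    refine ⟨A, ?_, back⟩
    intro w h1 h2
    by_cases hw : y ≤ w
    · have e : Φ.map (F.map (homOfLE h1)) '' A = Φ.map (F.map (homOfLE hw)) '' B := by
        rw [map_map' Φ F hxy hw A, back]
      rw [e]; exact hB w hw h2
    · have hwy : w ≤ y := le_of_not_ge hw
      haveI : IsIso (F.map (homOfLE hwy)) := win w y hwy (lt_of_lt_of_le hx h1) hy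
      have e : Φ.map (F.map (homOfLE hwy)) '' (Φ.map (F.map (homOfLE h1)) '' A) = B := by
        rw [← map_map' Φ F h1 hwy A, back]
      refine (mem_iff_of_isIso Φ 𝓕 hiso (F.map (homOfLE hwy)) _).mpr ?_
      rw [e]; exact hBy
  · rintro ⟨A, hA, rfl⟩
    intro w hw h2
    rw [← map_map' Φ F hxy hw A]
    exact hA w (hxy.trans hw) h2

include hiso in
lemma steady_right {b δ y z t : ℝ} (win : Window F b δ)
    (hyz : y ≤ z) (hzt : z ≤ t) (hz : b - δ < z) (ht : t < b + δ) :
    steadySet Φ 𝓕 F y z = steadySet Φ 𝓕 F y t := by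
  ext A
  constructor
  · intro hA w h1 h2
    by_cases hw : w ≤ z
    · exact hA w h1 hw
    · have hzw : z ≤ w := le_of_not_ge hw
      haveI : IsIso (F.map (homOfLE hzw)) := win z w hzw hz (lt_of_le_of_lt h2 ht)
      have e : Φ.map (F.map (homOfLE h1)) '' A
          = Φ.map (F.map (homOfLE hzw)) '' (Φ.map (F.map (homOfLE hyz)) '' A) := by
        rw [← map_map' Φ F hyz hzw A]
      rw [e]
      exact (mem_iff_of_isIso Φ 𝓕 hiso (F.map (homOfLE hzw)) _).mp (hA z hyz le_rfl)
  · intro hA w h1 h2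
    exact hA w h1 (h2.trans hzt)

include hiso in
lemma ranging_left {a δ x y z : ℝ} (win : Window F a δ)
    (hxy : x ≤ y) (hyz : y ≤ z) (hx : a - δ < x) (hy : y < a + δ) :
    rangingSet Φ 𝓕 F y z = Set.image (Φ.map (F.map (homOfLE hxy))) '' rangingSet Φ 𝓕 F x z := by
  ext B
  constructor
  · rintro ⟨x0, y0, hx0, hy0, hyy0, A', hA', hBeq, hIm⟩
    by_cases hcase : x0 ≤ x
    · refine ⟨Φ.map (F.map (homOfLE hcase)) '' A', ⟨x0, y0, hcase, hy0, hxy.trans hyy0, A', hA',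
        rfl, ?_⟩, ?_⟩
      · have e : Φ.map (F.map (homOfLE (hxy.trans hyy0)))
            '' (Φ.map (F.map (homOfLE hcase)) '' A') = Φ.map (F.map (homOfLE hyy0)) '' B := by
          rw [← map_map' Φ F hcase (hxy.trans hyy0) A', map_map' Φ F hx0 hyy0 A', ← hBeq]
        rw [e]
        exact hIm
      · rw [← map_map' Φ F hcase hxy A']
        exact hBeq.symm
    · have hxx0 : x ≤ x0 := le_of_not_ge hcase
      haveI : IsIso (F.map (homOfLE hxx0)) := win x x0 hxx0 hx (lt_of_le_of_lt hx0 hy)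
      set A : Set (Φ.obj (F.obj x)) := Φ.map (inv (F.map (homOfLE hxx0))) '' A' with hAdef
      have back : Φ.map (F.map (homOfLE hxx0)) '' A = A' :=
        image_inv_image Φ (F.map (homOfLE hxx0)) A'
      have hxyA : Φ.map (F.map (homOfLE hxy)) '' A = B := by
        rw [map_map' Φ F hxx0 hx0 A, back]
        exact hBeq.symm
      exact ⟨A, ⟨x, y0, le_rfl, hy0, hxy.trans hyy0, A,
        (mem_iff_of_isIso Φ 𝓕 hiso (F.map (homOfLE hxx0)) A).mpr (back ▸ hA'),
        (map_refl' Φ F x A).symm, by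
          rw [map_map' Φ F hxy hyy0 A, hxyA]
          exact hIm⟩, hxyA⟩
  · rintro ⟨A, ⟨x0, y0, hx0, hy0, hxy0, A', hA', hAeq, hIm⟩, rfl⟩
    refine ⟨x0, y0, hx0.trans hxy, hy0, hyz.trans hy0, A', hA', ?_, ?_⟩
    · rw [map_map' Φ F hx0 hxy A', ← hAeq]
    · rw [← map_map' Φ F hxy (hyz.trans hy0) A]
      exact hIm

include hiso in
lemma ranging_right {b δ y z t : ℝ} (win : Window F b δ)
    (hyz : y ≤ z) (hzt : z ≤ t) (hz : b - δ < z) (ht : t < b + δ) :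
    rangingSet Φ 𝓕 F y z = rangingSet Φ 𝓕 F y t := by
  ext A
  constructor
  · rintro ⟨x0, y0, hx0, hy0, hyy0, A', hA', hAeq, hIm⟩
    by_cases hty0 : t ≤ y0
    · exact ⟨x0, y0, hx0, hty0, hyy0, A', hA', hAeq, hIm⟩
    · have hy0t : y0 ≤ t := le_of_not_ge hty0
      haveI : IsIso (F.map (homOfLE hy0t)) := win y0 t hy0t (lt_of_lt_of_le hz hy0) ht
      refine ⟨x0, t, hx0, le_rfl, hyz.trans hzt, A', hA', hAeq, ?_⟩
      rw [map_map' Φ F hyy0 hy0t A]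
      exact (mem_iff_of_isIso Φ 𝓕 hiso (F.map (homOfLE hy0t)) _).mp hIm
  · rintro ⟨x0, y0, hx0, hy0, hyy0, A', hA', hAeq, hIm⟩
    exact ⟨x0, y0, hx0, hzt.trans hy0, hyy0, A', hA', hAeq, hIm⟩

end Aux

lemma int_sInf_le_zero' {s : Set ℤ} (h : (0:ℤ) ∈ s) : sInf s ≤ 0 := by
  by_cases hb : BddBelow s
  · exact csInf_le hb h
  · rw [ConditionallyCompleteLinearOrder.csInf_of_not_bddBelow s hb, Int.csInf_empty]

section Crit
variable {C : Type u} [Category.{v} C] (F : ℝ ⥤ C)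

lemma crit_of_pos_mult (p : ℝ → ℝ → ℤ)
    (Hleft : ∀ a δ : ℝ, Window F a δ → ∀ x y z : ℝ, x ≤ y → y ≤ z →
      a - δ < x → y < a + δ → p x z = p y z)
    (Hright : ∀ b δ : ℝ, Window F b δ → ∀ y z t : ℝ, y ≤ z → z ≤ t →
      b - δ < z → t < b + δ → p y z = p y t)
    {a b : ℝ} (hab : a < b) (hpos : 0 < mult p a b) : IsCritical F a ∧ IsCritical F b := by
  constructor
  · by_contra hnc
    obtain ⟨δ, hδ, win⟩ := exists_window F hnc
    set x := a - δ/2 with hxdef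
    set ε := min δ (b - a) with hεdef
    have hε : 0 < ε := lt_min hδ (by linarith)
    have hεδ : ε ≤ δ := min_le_left _ _
    have hεb : ε ≤ b - a := min_le_right _ _
    set y := a + ε/2 with hydef
    have hxy : x ≤ y := by rw [hxdef, hydef]; linarith
    have hx : a - δ < x := by rw [hxdef]; linarith
    have hy : y < a + δ := by rw [hydef]; linarith
    have hmem : (0:ℤ) ∈ {n : ℤ | ∃ x y z t : ℝ, x < a ∧ a < y ∧ y ≤ z ∧ z < b ∧ b < t ∧
        n = p y z - p x z - p y t + p x t} := by
      refine ⟨x, y, y, b + 1, by rw [hxdef]; linarith, by rw [hydef]; linarith, le_rfl,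
        by rw [hydef]; linarith, by linarith, ?_⟩
      have e1 := Hleft a δ win x y y hxy le_rfl hx hy
      have e2 := Hleft a δ win x y (b+1) hxy (by rw [hydef]; linarith) hx hy
      omega
    have hle : mult p a b ≤ 0 := int_sInf_le_zero' hmem
    omega
  · by_contra hnc
    obtain ⟨δ, hδ, win⟩ := exists_window F hnc
    set ε := min δ (b - a) with hεdef
    have hε : 0 < ε := lt_min hδ (by linarith)
    have hεδ : ε ≤ δ := min_le_left _ _
    have hεb : ε ≤ b - a := min_le_right _ _
    set z := b - ε/2 with hzdef
    set t := b + δ/2 with htdef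
    have hzt : z ≤ t := by rw [hzdef, htdef]; linarith
    have hz : b - δ < z := by rw [hzdef]; linarith
    have ht : t < b + δ := by rw [htdef]; linarith
    have hmem : (0:ℤ) ∈ {n : ℤ | ∃ x y z t : ℝ, x < a ∧ a < y ∧ y ≤ z ∧ z < b ∧ b < t ∧
        n = p y z - p x z - p y t + p x t} := by
      refine ⟨a - 1, z, z, t, by linarith, by rw [hzdef]; linarith, le_rfl,
        by rw [hzdef]; linarith, by rw [htdef]; linarith, ?_⟩
      have e1 := Hright b δ win z z t le_rfl hzt hz ht
      have e2 := Hright b δ win (a-1) z t (by rw [hzdef]; linarith) hzt hz ht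
      omega
    have hle : mult p a b ≤ 0 := int_sInf_le_zero' hmem
    omega

end Crit

/-- a tame filtration has finitely many off-diagonal cornerpoints,
both for the steady and for the ranging persistence function of any feature. -/
theorem tame_finite_diagram {C : Type u} [Category.{v} C] (Φ : C ⥤ Type v)
    (hfin : ∀ X : C, Finite (Φ.obj X)) (hfaith : Φ.Faithful)
    (hinj : ∀ {X Y : C} (f : X ⟶ Y), Function.Injective (Φ.map f))
    (hmono : ∀ {X Y : C} (f : X ⟶ Y), Mono f)
    (𝓕 : Feature Φ)
    (hiso : ∀ {X Y : C} (f : X ≅ Y) (A : Set (Φ.obj X)), A ∈ 𝓕 X ↔ Φ.map f.hom '' A ∈ 𝓕 Y)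
    (F : ℝ ⥤ C) (hF : Tame F) :
    {q : ℝ × ℝ | q.1 < q.2 ∧
        0 < mult (fun a b => (Nat.card (steadySet Φ 𝓕 F a b) : ℤ)) q.1 q.2}.Finite ∧
      {q : ℝ × ℝ | q.1 < q.2 ∧
        0 < mult (fun a b => (Nat.card (rangingSet Φ 𝓕 F a b) : ℤ)) q.1 q.2}.Finite := by
  have key : ∀ p : ℝ → ℝ → ℤ,
      (∀ a δ : ℝ, Window F a δ → ∀ x y z : ℝ, x ≤ y → y ≤ z → a - δ < x → y < a + δ →
        p x z = p y z) →
      (∀ b δ : ℝ, Window F b δ → ∀ y z t : ℝ, y ≤ z → z ≤ t → b - δ < z → t < b + δ →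
        p y z = p y t) →
      {q : ℝ × ℝ | q.1 < q.2 ∧ 0 < mult p q.1 q.2}.Finite := by
    intro p hL hR
    refine Set.Finite.subset (hF.prod hF) ?_
    rintro ⟨a, b⟩ ⟨hab, hpos⟩
    obtain ⟨h1, h2⟩ := crit_of_pos_mult F p hL hR hab hpos
    exact ⟨h1, h2⟩
  constructor
  · refine key _ ?_ ?_
    · intro a δ win x y z hxy hyz hx hy
      have h := steady_left Φ F 𝓕 hiso win hxy hyz hx hy
      have hc : Nat.card (steadySet Φ 𝓕 F y z) = Nat.card (steadySet Φ 𝓕 F x z) := by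
        rw [h]
        exact Nat.card_image_of_injective (Set.image_injective.mpr (hinj _)) _
      exact_mod_cast hc.symm
    · intro b δ win y z t hyz hzt hz ht
      have h := steady_right Φ F 𝓕 hiso win hyz hzt hz ht
      exact_mod_cast congrArg (fun s : Set _ => Nat.card s) h
  · refine key _ ?_ ?_
    · intro a δ win x y z hxy hyz hx hy
      have h := ranging_left Φ F 𝓕 hiso win hxy hyz hx hy
      have hc : Nat.card (rangingSet Φ 𝓕 F y z) = Nat.card (rangingSet Φ 𝓕 F x z) := by
        rw [h]
        exact Nat.card_image_of_injective (Set.image_injective.mpr (hinj _)) _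
      exact_mod_cast hc.symm
    · intro b δ win y z t hyz hzt hz ht
      have h := ranging_right Φ F 𝓕 hiso win hyz hzt hz ht
      exact_mod_cast congrArg (fun s : Set _ => Nat.card s) h
end
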